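/- arXiv:2605.09901 — 3 statements merged into one kernel-verified Lean document; each statement's English description precedes it below -/
import Mathlib

section
/- Let γ̃ : [0,1] → 𝕆 be a continuous path in the octonions and let δ > 0. Then there exist continuous paths γ : [0,1] → ℂ and Θ : [0,1] → 𝕊 (into the sphere of imaginary units) such that the circular lifting γ_Θ(t) := τ_{Θ(t)}(γ(t)) satisfies γ_Θ(0) = γ̃(0), γ_Θ(1) = γ̃(1), and sup_{t ∈ [0,1]} |γ̃(t) - γ_Θ(t)| < δ. -/
noncomputable section

/-- The octonions, realized as the Cayley–Dickson double of the quaternions. -/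
@[ext] structure Octonion : Type where
  a : Quaternion ℝ
  b : Quaternion ℝ

notation "𝕆" => Octonion

namespace Octonion

instance : Zero 𝕆 := ⟨⟨0, 0⟩⟩
instance : One 𝕆 := ⟨⟨1, 0⟩⟩
instance : Add 𝕆 := ⟨fun x y => ⟨x.a + y.a, x.b + y.b⟩⟩
instance : Neg 𝕆 := ⟨fun x => ⟨-x.a, -x.b⟩⟩
instance : Sub 𝕆 := ⟨fun x y => ⟨x.a - y.a, x.b - y.b⟩⟩
/-- Cayley–Dickson multiplication. -/
instance : Mul 𝕆 := ⟨fun x y => ⟨x.a * y.a - star y.b * x.b, y.b * x.a + x.b * star y.a⟩⟩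
instance : SMul ℝ 𝕆 := ⟨fun r x => ⟨r • x.a, r • x.b⟩⟩
instance : SMul ℕ 𝕆 := ⟨fun n x => ⟨n • x.a, n • x.b⟩⟩
instance : SMul ℤ 𝕆 := ⟨fun n x => ⟨n • x.a, n • x.b⟩⟩

def toProd (x : 𝕆) : Quaternion ℝ × Quaternion ℝ := (x.a, x.b)

lemma toProd_injective : Function.Injective toProd := by
  intro x y h
  cases x; cases y
  simpa [toProd, Prod.ext_iff, Octonion.mk.injEq] using h

instance : AddCommGroup 𝕆 :=
  Function.Injective.addCommGroup toProd toProd_injective rfl (fun _ _ => rfl) (fun _ => rfl)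
    (fun _ _ => rfl) (fun _ _ => rfl) (fun _ _ => rfl)

def toProdHom : 𝕆 →+ Quaternion ℝ × Quaternion ℝ :=
  { toFun := toProd, map_zero' := rfl, map_add' := fun _ _ => rfl }

instance : Module ℝ 𝕆 :=
  Function.Injective.module ℝ toProdHom toProd_injective (fun _ _ => rfl)

def toProdLin : 𝕆 →ₗ[ℝ] Quaternion ℝ × Quaternion ℝ :=
  { toFun := toProd, map_add' := fun _ _ => rfl, map_smul' := fun _ _ => rfl }

instance : NormedAddCommGroup 𝕆 := NormedAddCommGroup.induced 𝕆 _ toProdHom toProd_injective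
instance : NormedSpace ℝ 𝕆 := NormedSpace.induced ℝ 𝕆 _ toProdLin

/-- Octonionic conjugation. -/
def conj (x : 𝕆) : 𝕆 := ⟨star x.a, -x.b⟩

/-- The real part of an octonion. -/
def re (x : 𝕆) : ℝ := x.a.re

/-- The imaginary part of an octonion. -/
def im (x : 𝕆) : 𝕆 := ⟨x.a.im, x.b⟩

/-- The squared (Euclidean) norm of an octonion. -/
def normSq (x : 𝕆) : ℝ := Quaternion.normSq x.a + Quaternion.normSq x.b

/-- The (Euclidean) norm of an octonion. -/
def onorm (x : 𝕆) : ℝ := Real.sqrt (normSq x)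

instance : Inv 𝕆 := ⟨fun x => (normSq x)⁻¹ • conj x⟩

/-- The sphere of imaginary units of `𝕆`. -/
def sph : Set 𝕆 := {I | onorm I = 1 ∧ re I = 0}

/-- `tau I (α + β i) = α + β I`. -/
def tau (I : 𝕆) (z : ℂ) : 𝕆 := z.re • (1 : 𝕆) + z.im • I

end Octonion

/-!
Write the path as its real part plus a path `m` in the 7-dimensional space of imaginary
octonions; it suffices to approximate `m` by `c • θ` with `c` real and `θ` a continuous path of
unit vectors, exactly at the endpoints. A smooth approximation of `m` is pushed off the origin by a
small perturbation chosen outside a `C¹` curve, which is possible because such a curve has dense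
complement in dimension at least two. Normalizing the resulting nowhere-vanishing path `N` gives
`θ`, and `c` is the component of `m` along `θ`: this orthogonal projection is no farther from `m`
than `N`, and it returns `m` itself at an endpoint where `N` equals `m` or `m` vanishes.
-/

open Set Module

section NormedSpace

variable {F : Type*} [NormedAddCommGroup F] [NormedSpace ℝ F]

theorem Continuous.exists_contDiff_approx_with_endpoints {f : ℝ → F} (hf : Continuous f)
    {ε : ℝ} {a b : F} (ha : ‖a - f 0‖ < ε) (hb : ‖b - f 1‖ < ε) :
    ∃ p : ℝ → F, ContDiff ℝ 1 p ∧ p 0 = a ∧ p 1 = b ∧ ∀ t ∈ Icc (0 : ℝ) 1, ‖p t - f t‖ < ε := by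
  obtain ⟨η, hη, hηa, hηb⟩ : ∃ η > 0, 2 * η ≤ ε - ‖a - f 0‖ ∧ 2 * η ≤ ε - ‖b - f 1‖ :=
    ⟨min (ε - ‖a - f 0‖) (ε - ‖b - f 1‖) / 2, by positivity,
      by linarith [min_le_left (ε - ‖a - f 0‖) (ε - ‖b - f 1‖)],
      by linarith [min_le_right (ε - ‖a - f 0‖) (ε - ‖b - f 1‖)]⟩
  obtain ⟨g, hg, hgf, -⟩ := hf.exists_contDiff_approx 1 continuous_const fun _ ↦ hη
  simp only [dist_eq_norm] at hgf
  refine ⟨fun t ↦ g t + (1 - t) • (a - g 0) + t • (b - g 1), by fun_prop, by simp, by simp, ?_⟩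
  rintro t ⟨ht0, ht1⟩
  have hga : ‖a - g 0‖ ≤ ε - η := by
    linarith [norm_sub_le_norm_sub_add_norm_sub a (f 0) (g 0), norm_sub_rev (f 0) (g 0), hgf 0]
  have hgb : ‖b - g 1‖ ≤ ε - η := by
    linarith [norm_sub_le_norm_sub_add_norm_sub b (f 1) (g 1), norm_sub_rev (f 1) (g 1), hgf 1]
  calc ‖g t + (1 - t) • (a - g 0) + t • (b - g 1) - f t‖
      = ‖(g t - f t) + (1 - t) • (a - g 0) + t • (b - g 1)‖ := by congr 1; abel
    _ ≤ ‖g t - f t‖ + (1 - t) * ‖a - g 0‖ + t * ‖b - g 1‖ := by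
      refine norm_add₃_le.trans_eq ?_
      rw [norm_smul, norm_smul, Real.norm_of_nonneg (by linarith), Real.norm_of_nonneg ht0]
    _ < η + (1 - t) * (ε - η) + t * (ε - η) := by
      have := mul_le_mul_of_nonneg_left hga (sub_nonneg.mpr ht1)
      have := mul_le_mul_of_nonneg_left hgb ht0
      linarith [hgf t]
    _ = ε := by ring

theorem exists_ne_zero_norm_sub_lt [Nontrivial F] (x : F) {ε : ℝ} (hε : 0 < ε) :
    ∃ q : F, q ≠ 0 ∧ ‖q - x‖ < ε ∧ (x = 0 ∨ q = x) := by
  by_cases hx : x = 0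
  · obtain ⟨q, hq⟩ := exists_norm_eq F (half_pos hε).le
    refine ⟨q, norm_pos_iff.mp (hq ▸ half_pos hε), ?_, .inl hx⟩
    rw [hx, sub_zero, hq]
    exact half_lt_self hε
  · exact ⟨x, hx, by simpa using hε, .inr rfl⟩

variable [FiniteDimensional ℝ F]

theorem exists_norm_lt_forall_add_smul_ne_zero (hF : 1 < finrank ℝ F) {p : ℝ → F} {b : ℝ → ℝ}
    {s : Set ℝ} (hs : Convex ℝ s) (hp : ContDiffOn ℝ 1 p s) (hb : ContDiffOn ℝ 1 b s)
    (hb0 : ∀ t ∈ s, b t ≠ 0) {ε : ℝ} (hε : 0 < ε) :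
    ∃ y : F, ‖y‖ < ε ∧ ∀ t ∈ s, p t + b t • y ≠ 0 := by
  -- `p t + b t • y = 0` exactly when `y` lies on the `C¹` curve `t ↦ -(b t)⁻¹ • p t`.
  have hg : ContDiffOn ℝ 1 (fun t ↦ -(b t)⁻¹ • p t) s := by
    fun_prop (disch := assumption)
  have hdim : dimH s < finrank ℝ F :=
    calc dimH s ≤ dimH (univ : Set ℝ) := dimH_mono (subset_univ s)
      _ = 1 := by simp [Real.dimH_univ_eq_finrank]
      _ < finrank ℝ F := by exact_mod_cast hF
  obtain ⟨y, hyε, hy⟩ := (hg.dense_compl_image_of_dimH_lt_finrank hs subset_rfl hdim)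
    |>.inter_open_nonempty (Metric.ball 0 ε) Metric.isOpen_ball ⟨0, Metric.mem_ball_self hε⟩
  refine ⟨y, mem_ball_zero_iff.mp hyε, fun t ht hzero ↦ hy ⟨t, ht, ?_⟩⟩
  dsimp only
  rw [eq_neg_of_add_eq_zero_left hzero, neg_smul_neg, inv_smul_smul₀ (hb0 t ht)]

theorem exists_continuous_ne_zero_approx (hF : 1 < finrank ℝ F) {m : unitInterval → F}
    (hm : Continuous m) {ε : ℝ} (hε : 0 < ε) :
    ∃ N : unitInterval → F, Continuous N ∧ (∀ t, N t ≠ 0) ∧ (∀ t, ‖N t - m t‖ < ε) ∧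
      (m 0 = 0 ∨ N 0 = m 0) ∧ (m 1 = 0 ∨ N 1 = m 1) := by
  have : Nontrivial F := Module.nontrivial_of_finrank_pos (R := ℝ) (by omega)
  obtain ⟨q₀, hq₀, hq₀m, hq₀e⟩ := exists_ne_zero_norm_sub_lt (m 0) (half_pos hε)
  obtain ⟨q₁, hq₁, hq₁m, hq₁e⟩ := exists_ne_zero_norm_sub_lt (m 1) (half_pos hε)
  obtain ⟨p, hp, hp0, hp1, hpm⟩ :=
    (hm.Icc_extend' (h := zero_le_one)).exists_contDiff_approx_with_endpoints (a := q₀) (b := q₁)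
      (by rwa [IccExtend_left]) (by rwa [IccExtend_right])
  -- The perturbation `t * (1 - t) • y` vanishes at the endpoints, where `p` is already nonzero.
  obtain ⟨y, hy, hpy⟩ := exists_norm_lt_forall_add_smul_ne_zero hF (convex_Ioo 0 1)
    hp.contDiffOn (by fun_prop : ContDiffOn ℝ 1 (fun t : ℝ ↦ t * (1 - t)) _)
    (fun t ht ↦ (mul_pos ht.1 (sub_pos.2 ht.2)).ne') (half_pos hε)
  refine ⟨fun t ↦ p t + ((t : ℝ) * (1 - t)) • y, by fun_prop, ?_, fun t ↦ ?_, ?_, ?_⟩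
  · rintro ⟨t, ht0, ht1⟩
    rcases ht0.eq_or_lt with rfl | ht0
    · simpa [hp0] using hq₀
    rcases ht1.eq_or_lt with rfl | ht1
    · simpa [hp1] using hq₁
    exact hpy t ⟨ht0, ht1⟩
  · have hb1 : (t : ℝ) * (1 - t) ≤ 1 := by nlinarith [t.2.1, t.2.2]
    have hb0 : 0 ≤ (t : ℝ) * (1 - t) := mul_nonneg t.2.1 (sub_nonneg.2 t.2.2)
    have hpt := hpm t t.2
    rw [IccExtend_val] at hpt
    calc ‖p t + ((t : ℝ) * (1 - t)) • y - m t‖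
        = ‖(p t - m t) + ((t : ℝ) * (1 - t)) • y‖ := by congr 1; abel
      _ ≤ ‖p t - m t‖ + (t : ℝ) * (1 - t) * ‖y‖ := by
        refine (norm_add_le _ _).trans_eq ?_
        rw [norm_smul, Real.norm_of_nonneg hb0]
      _ < ε := by nlinarith [norm_nonneg y]
  · simpa [hp0] using hq₀e
  · simpa [hp1] using hq₁e

end NormedSpace

section InnerProductSpace

open scoped InnerProductSpace

variable {F : Type*} [NormedAddCommGroup F] [InnerProductSpace ℝ F]

theorem norm_sub_inner_smul_le {u : F} (hu : ‖u‖ = 1) (w : F) (r : ℝ) :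
    ‖w - ⟪u, w⟫_ℝ • u‖ ≤ ‖w - r • u‖ := by
  rw [← Submodule.starProjection_unit_singleton ℝ hu, Submodule.starProjection_minimal]
  exact ciInf_le ⟨0, by rintro _ ⟨x, rfl⟩; positivity⟩
    (⟨r • u, Submodule.smul_mem _ _ (Submodule.mem_span_singleton_self u)⟩ : ℝ ∙ u)

theorem inner_smul_eq_of_eq_zero_or_eq {x w : F} (h : w = 0 ∨ x = w) :
    ⟪‖x‖⁻¹ • x, w⟫_ℝ • (‖x‖⁻¹ • x) = w := by
  rcases h with rfl | rfl
  · simp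
  rcases eq_or_ne x 0 with rfl | hx
  · simp
  rw [real_inner_smul_left, real_inner_self_eq_norm_sq, smul_smul]
  field_simp
  simp

theorem exists_continuous_smul_unit_approx [FiniteDimensional ℝ F] (hF : 1 < finrank ℝ F)
    {m : unitInterval → F} (hm : Continuous m) {ε : ℝ} (hε : 0 < ε) :
    ∃ c : unitInterval → ℝ, ∃ θ : unitInterval → F, Continuous c ∧ Continuous θ ∧
      (∀ t, ‖θ t‖ = 1) ∧ c 0 • θ 0 = m 0 ∧ c 1 • θ 1 = m 1 ∧
      ∀ t, ‖m t - c t • θ t‖ < ε := by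
  obtain ⟨N, hN, hN0, hNm, h0, h1⟩ := exists_continuous_ne_zero_approx hF hm hε
  have hθ : Continuous fun t ↦ ‖N t‖⁻¹ • N t :=
    (hN.norm.inv₀ fun t ↦ norm_ne_zero_iff.2 (hN0 t)).smul hN
  refine ⟨fun t ↦ ⟪‖N t‖⁻¹ • N t, m t⟫_ℝ, fun t ↦ ‖N t‖⁻¹ • N t, hθ.inner hm, hθ,
    fun t ↦ norm_smul_inv_norm (hN0 t), inner_smul_eq_of_eq_zero_or_eq h0,
    inner_smul_eq_of_eq_zero_or_eq h1, fun t ↦ ?_⟩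
  calc ‖m t - ⟪‖N t‖⁻¹ • N t, m t⟫_ℝ • (‖N t‖⁻¹ • N t)‖
      ≤ ‖m t - ‖N t‖ • (‖N t‖⁻¹ • N t)‖ :=
        norm_sub_inner_smul_le (norm_smul_inv_norm (hN0 t)) _ _
    _ = ‖N t - m t‖ := by rw [smul_inv_smul₀ (norm_ne_zero_iff.2 (hN0 t)), norm_sub_rev]
    _ < ε := hNm t

end InnerProductSpace

namespace Octonion

open scoped Quaternion

instance : FiniteDimensional ℝ 𝕆 := Module.Finite.of_injective toProdLin toProd_injective

def imCoord : 𝕆 →ₗ[ℝ] EuclideanSpace ℝ (Fin 7) where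
  toFun x := !₂[x.a.imI, x.a.imJ, x.a.imK, x.b.re, x.b.imI, x.b.imJ, x.b.imK]
  map_add' x y := by ext i; fin_cases i <;> rfl
  map_smul' r x := by ext i; fin_cases i <;> rfl

def ofImCoord : EuclideanSpace ℝ (Fin 7) →ₗ[ℝ] 𝕆 where
  toFun v := ⟨⟨0, v 0, v 1, v 2⟩, ⟨v 3, v 4, v 5, v 6⟩⟩
  map_add' u v := by ext <;> first | rfl | exact (add_zero 0).symm
  map_smul' r v := by ext <;> first | rfl | exact (smul_zero r).symm

theorem continuous_re : Continuous re :=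
  Quaternion.continuous_re.comp (continuous_fst.comp toProdLin.continuous_of_finiteDimensional)

theorem re_ofImCoord (v : EuclideanSpace ℝ (Fin 7)) : re (ofImCoord v) = 0 := rfl

theorem onorm_ofImCoord (v : EuclideanSpace ℝ (Fin 7)) : onorm (ofImCoord v) = ‖v‖ := by
  rw [onorm, normSq, Quaternion.normSq_def', Quaternion.normSq_def', EuclideanSpace.norm_eq,
    Fin.sum_univ_seven]
  simp [ofImCoord]
  ring_nf

theorem re_smul_one_add_ofImCoord (x : 𝕆) : re x • (1 : 𝕆) + ofImCoord (imCoord x) = x := by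
  -- The octonion operations come without simp lemmas; they are unfolded componentwise by hand.
  have smul_one (r : ℝ) : r • (1 : 𝕆) = ⟨r • 1, r • 0⟩ := rfl
  ext <;> (change _ + _ = _; simp [smul_one, re, imCoord, ofImCoord])

theorem sub_tau_ofImCoord (x : 𝕆) (c : ℝ) (v : EuclideanSpace ℝ (Fin 7)) :
    x - tau (ofImCoord v) ⟨re x, c⟩ = ofImCoord (imCoord x - c • v) :=
  calc x - tau (ofImCoord v) ⟨re x, c⟩
      = (re x • 1 + ofImCoord (imCoord x)) - (re x • 1 + c • ofImCoord v) := by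
        rw [re_smul_one_add_ofImCoord]; rfl
    _ = ofImCoord (imCoord x - c • v) := by rw [map_sub, map_smul]; abel

end Octonion

open Octonion in
/-- every continuous path in `𝕆` can be uniformly approximated, to within any
`δ > 0`, by a circular lifting with the same endpoints. -/
theorem stmt6 (γ' : unitInterval → 𝕆) (hcont : Continuous γ') (δ : ℝ) (hδ : 0 < δ) :
    ∃ γ : unitInterval → ℂ, ∃ Θ : unitInterval → 𝕆,
      Continuous γ ∧ Continuous Θ ∧ (∀ t, Θ t ∈ sph) ∧
      tau (Θ 0) (γ 0) = γ' 0 ∧ tau (Θ 1) (γ 1) = γ' 1 ∧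
      ∀ t, onorm (γ' t - tau (Θ t) (γ t)) < δ := by
  obtain ⟨c, θ, hc, hθ, hθ1, h0, h1, hlt⟩ := exists_continuous_smul_unit_approx
    (by simp : 1 < finrank ℝ (EuclideanSpace ℝ (Fin 7)))
    (m := fun t ↦ imCoord (γ' t)) (by fun_prop) hδ
  have hsub (t) : γ' t - tau (ofImCoord (θ t)) ⟨re (γ' t), c t⟩ =
      ofImCoord (imCoord (γ' t) - c t • θ t) := sub_tau_ofImCoord _ _ _
  refine ⟨fun t ↦ ⟨re (γ' t), c t⟩, fun t ↦ ofImCoord (θ t),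
    Complex.equivRealProdCLM.symm.continuous.comp ((continuous_re.comp hcont).prodMk hc),
    ofImCoord.continuous_of_finiteDimensional.comp hθ,
    fun t ↦ ⟨(onorm_ofImCoord _).trans (hθ1 t), re_ofImCoord _⟩, ?_, ?_, fun t ↦ ?_⟩
  · rw [eq_comm, ← sub_eq_zero, hsub, h0, sub_self, map_zero]
  · rw [eq_comm, ← sub_eq_zero, hsub, h1, sub_self, map_zero]
  · rw [hsub, onorm_ofImCoord]
    exact hlt t
end
end

section
/- Let Ω ⊆ 𝕆 be a domain that is star-shaped with respect to a point a on the real axis. Then any two points x, x' ∈ Ω with Re(x) = Re(x') and |Im(x)| = |Im(x')| are CCL-connected in Ω: there exist two circular liftings in Ω with a common base path and spherical coordinates sharing the same initial value, whose terminal points are x and x' respectively. -/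
/-!
Write `x = τ_I(z)` with `z = re x + |im x| i` and `I` a unit of `𝕊`; then `x' = τ_J(z)` for the
same `z`. Both liftings use the base path that retracts `z` along the segment to the real point
`r`, pauses there and returns to `z`. The first keeps the unit `I`; the second moves from `I` to `J`
along a path in `𝕊 ≅ S⁶` during the pause, which costs nothing because `τ_K(r) = r` for every `K`.
Star-shapedness keeps both liftings in `Ω`.
-/

noncomputable section

namespace Octonion

/-- `γ` and `Θ` define a circular lifting `t ↦ τ_{Θ t}(γ t)`: `γ` is a continuous path in `ℂ`
(the base) and `Θ` a continuous path in the sphere of imaginary units (the spherical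
coordinate). -/
def IsCircularLifting (γ : unitInterval → ℂ) (Θ : unitInterval → 𝕆) : Prop :=
  Continuous γ ∧ Continuous Θ ∧ ∀ t, Θ t ∈ sph

/-- `x` and `x'` are CCL-connected in `Ω`: they are the terminal points of a pair of coupled
circular liftings contained in `Ω` (common base, same initial spherical coordinate). -/
def CCLConnected (Ω : Set 𝕆) (x x' : 𝕆) : Prop :=
  ∃ γ Θ₁ Θ₂, IsCircularLifting γ Θ₁ ∧ IsCircularLifting γ Θ₂ ∧ Θ₁ 0 = Θ₂ 0 ∧
    (∀ t, tau (Θ₁ t) (γ t) ∈ Ω) ∧ (∀ t, tau (Θ₂ t) (γ t) ∈ Ω) ∧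
    tau (Θ₁ 1) (γ 1) = x ∧ tau (Θ₂ 1) (γ 1) = x'

/-- CCL-equivalence in `Ω`: the equivalence closure of CCL-connectedness (finite chains). -/
def CCLEquiv (Ω : Set 𝕆) : 𝕆 → 𝕆 → Prop := Relation.EqvGen (CCLConnected Ω)

end Octonion

def retractionWeight (t : ℝ) : ℝ := max 0 (|4 * t - 2| - 1)

@[fun_prop]
lemma continuous_retractionWeight : Continuous retractionWeight := by
  unfold retractionWeight
  fun_prop

lemma retractionWeight_nonneg (t : ℝ) : 0 ≤ retractionWeight t := le_max_left _ _

lemma retractionWeight_le_one {t : ℝ} (ht : t ∈ unitInterval) : retractionWeight t ≤ 1 :=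
  max_le zero_le_one <| by
    linarith [abs_le.mpr (⟨by linarith [ht.1], by linarith [ht.2]⟩ :
      -2 ≤ 4 * t - 2 ∧ 4 * t - 2 ≤ 2)]

lemma retractionWeight_eq_zero {t : ℝ} (h₁ : 1 / 4 ≤ t) (h₂ : t ≤ 3 / 4) :
    retractionWeight t = 0 :=
  max_eq_left <| by
    linarith [abs_le.mpr (⟨by linarith, by linarith⟩ : -1 ≤ 4 * t - 2 ∧ 4 * t - 2 ≤ 1)]

@[simp] lemma retractionWeight_one : retractionWeight 1 = 1 := by norm_num [retractionWeight]

namespace Octonion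

@[simp] lemma add_a (x y : 𝕆) : (x + y).a = x.a + y.a := rfl
@[simp] lemma add_b (x y : 𝕆) : (x + y).b = x.b + y.b := rfl
@[simp] lemma smul_a (c : ℝ) (x : 𝕆) : (c • x).a = c • x.a := rfl
@[simp] lemma smul_b (c : ℝ) (x : 𝕆) : (c • x).b = c • x.b := rfl
@[simp] lemma one_a : (1 : 𝕆).a = 1 := rfl
@[simp] lemma one_b : (1 : 𝕆).b = 0 := rfl

/-- The norm instance on `𝕆` is the max of the two quaternion norms, not `onorm`; this
`onorm`-isometry onto the imaginary octonions is what exhibits `sph` as a round sphere. -/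
def imEmbedding : EuclideanSpace ℝ (Fin 7) →ₗ[ℝ] 𝕆 where
  toFun v := ⟨⟨0, v 0, v 1, v 2⟩, ⟨v 3, v 4, v 5, v 6⟩⟩
  map_add' _ _ := Octonion.ext (QuaternionAlgebra.ext (add_zero 0).symm rfl rfl rfl) rfl
  map_smul' c _ := Octonion.ext (QuaternionAlgebra.ext (smul_zero c).symm rfl rfl rfl) rfl

def imCoords (x : 𝕆) : EuclideanSpace ℝ (Fin 7) :=
  !₂[x.a.imI, x.a.imJ, x.a.imK, x.b.re, x.b.imI, x.b.imJ, x.b.imK]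

lemma re_imEmbedding (v : EuclideanSpace ℝ (Fin 7)) : re (imEmbedding v) = 0 := rfl

lemma normSq_quaternion_mk (a b c d : ℝ) :
    Quaternion.normSq (⟨a, b, c, d⟩ : Quaternion ℝ) = a ^ 2 + b ^ 2 + c ^ 2 + d ^ 2 :=
  Quaternion.normSq_def' _

lemma onorm_imEmbedding (v : EuclideanSpace ℝ (Fin 7)) : onorm (imEmbedding v) = ‖v‖ := by
  change √(Quaternion.normSq (⟨0, v 0, v 1, v 2⟩ : Quaternion ℝ) +
    Quaternion.normSq (⟨v 3, v 4, v 5, v 6⟩ : Quaternion ℝ)) = ‖v‖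
  rw [normSq_quaternion_mk, normSq_quaternion_mk, EuclideanSpace.norm_eq, Fin.sum_univ_seven]
  simp only [Real.norm_eq_abs, sq_abs]
  ring_nf

lemma imEmbedding_imCoords (x : 𝕆) : imEmbedding (imCoords x) = im x := rfl

lemma re_smul_one_add_im (x : 𝕆) : re x • (1 : 𝕆) + im x = x := by
  apply Octonion.ext <;> simp [re, im, ← Algebra.algebraMap_eq_smul_one]

lemma sph_eq_image_sphere : sph = imEmbedding '' Metric.sphere 0 1 := by
  ext I
  constructor
  · rintro ⟨hI_norm, hI_re⟩
    have hI_im : im I = I := by simpa [hI_re] using re_smul_one_add_im I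
    refine ⟨imCoords I, ?_, by rw [imEmbedding_imCoords, hI_im]⟩
    rw [mem_sphere_zero_iff_norm, ← onorm_imEmbedding, imEmbedding_imCoords, hI_im, hI_norm]
  · rintro ⟨v, hv, rfl⟩
    exact ⟨by rwa [onorm_imEmbedding, ← mem_sphere_zero_iff_norm], re_imEmbedding v⟩

lemma isPathConnected_sph : IsPathConnected sph := by
  rw [sph_eq_image_sphere]
  exact (isPathConnected_sphere (by simp [← Module.finrank_eq_rank]) 0 zero_le_one).image
    (LinearMap.continuous_of_finiteDimensional imEmbedding)

lemma exists_mem_sph_tau_eq (x : 𝕆) : ∃ I ∈ sph, tau I ⟨re x, onorm (im x)⟩ = x := by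
  have hx : re x • (1 : 𝕆) + imEmbedding (imCoords x) = x := by
    rw [imEmbedding_imCoords, re_smul_one_add_im]
  rw [← imEmbedding_imCoords, onorm_imEmbedding]
  rcases eq_or_ne (imCoords x) 0 with h | h
  · obtain ⟨I, hI⟩ := isPathConnected_sph.nonempty
    exact ⟨I, hI, by simpa [tau, h] using hx⟩
  · refine ⟨imEmbedding (‖imCoords x‖⁻¹ • imCoords x), ?_, ?_⟩
    · rw [sph_eq_image_sphere]
      exact Set.mem_image_of_mem _ (by simp [norm_smul, h])
    · simpa [tau, map_smul, smul_smul, h] using hx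

lemma tau_ofReal (I : 𝕆) (c : ℝ) : tau I c = c • 1 := by simp [tau]

lemma tau_add_smul_sub (I : 𝕆) (c s : ℝ) (z : ℂ) :
    tau I (c + s • (z - c)) = c • 1 + s • (tau I z - c • 1) := by
  simp only [tau, Complex.add_re, Complex.add_im, Complex.real_smul, Complex.mul_re,
    Complex.mul_im, Complex.sub_re, Complex.sub_im, Complex.ofReal_re, Complex.ofReal_im]
  module

lemma tau_add_smul_sub_mem {Ω : Set 𝕆} {r : ℝ} (hΩ : StarConvex ℝ (r • (1 : 𝕆)) Ω) {I : 𝕆}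
    {z : ℂ} (hz : tau I z ∈ Ω) {s : ℝ} (hs₀ : 0 ≤ s) (hs₁ : s ≤ 1) :
    tau I (r + s • (z - r)) ∈ Ω := by
  rw [tau_add_smul_sub]
  exact hΩ.add_smul_sub_mem hz hs₀ hs₁

theorem cclConnected_tau {Ω : Set 𝕆} {r : ℝ} (hΩ : StarConvex ℝ (r • (1 : 𝕆)) Ω) {z : ℂ}
    {I J : 𝕆} (hI : I ∈ sph) (hJ : J ∈ sph) (hIz : tau I z ∈ Ω) (hJz : tau J z ∈ Ω) :
    CCLConnected Ω (tau I z) (tau J z) := by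
  obtain ⟨P, hP⟩ := isPathConnected_sph.joinedIn I hI J hJ
  let γ : unitInterval → ℂ := fun t => r + retractionWeight t • (z - r)
  let Θ : unitInterval → 𝕆 := fun t => P.extend (2 * t - 1 / 2)
  have hγ : Continuous γ := by fun_prop
  have hΘ : IsCircularLifting γ Θ := by
    refine ⟨hγ, P.continuous_extend.comp (by fun_prop), fun t => ?_⟩
    obtain ⟨u, hu⟩ : Θ t ∈ Set.range P := P.extend_range ▸ Set.mem_range_self _
    exact hu ▸ hP u
  have hγ_mem {K : 𝕆} (hK : tau K z ∈ Ω) (t : unitInterval) : tau K (γ t) ∈ Ω :=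
    tau_add_smul_sub_mem hΩ hK (retractionWeight_nonneg t) (retractionWeight_le_one t.2)
  refine ⟨γ, fun _ => I, Θ, ⟨hγ, continuous_const, fun _ => hI⟩, hΘ,
    (P.extend_of_le_zero (by norm_num)).symm, hγ_mem hIz, fun t => ?_, by simp [γ], ?_⟩
  · rcases le_or_gt (t : ℝ) (1 / 4) with h | h
    · rw [show Θ t = I from P.extend_of_le_zero (by linarith)]
      exact hγ_mem hIz t
    rcases le_or_gt (3 / 4) (t : ℝ) with h' | h'
    · rw [show Θ t = J from P.extend_of_one_le (by linarith)]
      exact hγ_mem hJz t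
    · have hγr : γ t = r := by simp [γ, retractionWeight_eq_zero h.le h'.le]
      rw [hγr, tau_ofReal]
      exact hΩ.mem ⟨_, hIz⟩
  · simp only [γ, Θ, Set.Icc.coe_one, retractionWeight_one, one_smul, add_sub_cancel,
      P.extend_of_one_le (show (1 : ℝ) ≤ 2 * 1 - 1 / 2 by norm_num)]

end Octonion

open Octonion in
theorem stmt11_general (Ω : Set 𝕆) (r : ℝ)
    (hstar : StarConvex ℝ (r • (1 : 𝕆)) Ω) (x x' : 𝕆) (hx : x ∈ Ω) (hx' : x' ∈ Ω)
    (hre : re x = re x') (him : onorm (im x) = onorm (im x')) :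
    CCLConnected Ω x x' := by
  obtain ⟨I, hI, hxI⟩ := exists_mem_sph_tau_eq x
  obtain ⟨J, hJ, hxJ⟩ := exists_mem_sph_tau_eq x'
  rw [hre, him] at hxI
  have h := cclConnected_tau hstar hI hJ (by rwa [hxI]) (by rwa [hxJ])
  rwa [hxI, hxJ] at h

open Octonion in
/-- in a domain star-shaped with respect to a point of the real axis, any two
points with the same real part and imaginary parts of the same norm are CCL-connected. -/
theorem stmt11 (Ω : Set 𝕆) (hΩo : IsOpen Ω) (hΩne : Ω.Nonempty) (r : ℝ)
    (hstar : StarConvex ℝ (r • (1 : 𝕆)) Ω) (x x' : 𝕆) (hx : x ∈ Ω) (hx' : x' ∈ Ω)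
    (hre : re x = re x') (him : onorm (im x) = onorm (im x')) :
    CCLConnected Ω x x' :=
  stmt11_general Ω r hstar x x' hx hx' hre him
end
end

section
/- Let Ω ⊆ 𝕆 be a domain and γ_Θ a circular lifting contained in Ω, with base γ : [0,1] → ℂ and spherical coordinate Θ : [0,1] → 𝕊. Then the map Γ : [0,1] → D_Ω, Γ(t) := [(γ(t), Θ(t))], is continuous and satisfies P ∘ Γ = γ; that is, Γ is a lifting of γ with respect to the local homeomorphism P : D_Ω → ℂ. -/
noncomputable section

namespace Octonion

/-- The disjoint union `Ω̂` of the complex slices of `Ω`, topologized as a disjoint union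
(a set is open iff it is a union `⋃_I O^I × {I}` with each `O^I` open in `Ω^I`). -/
abbrev OHat (Ω : Set 𝕆) : Type := Σ I : sph, {z : ℂ // tau I.1 z ∈ Ω}

/-- The CCL equivalence relation on `Ω̂`: `(z,I) ≃ (z',I')` iff `z = z'` and `τ_I z`,
`τ_{I'} z'` are CCL-equivalent in `Ω`. -/
def ohatSetoid (Ω : Set 𝕆) : Setoid (OHat Ω) where
  r p q := p.2.1 = q.2.1 ∧ CCLEquiv Ω (tau p.1.1 p.2.1) (tau q.1.1 q.2.1)
  iseqv := ⟨fun p => ⟨rfl, Relation.EqvGen.refl _⟩,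
    fun h => ⟨h.1.symm, Relation.EqvGen.symm _ _ h.2⟩,
    fun h h' => ⟨h.1.trans h'.1, Relation.EqvGen.trans _ _ _ h.2 h'.2⟩⟩

/-- The quotient `D_Ω` of `Ω̂` by CCL equivalence, with the quotient topology. -/
abbrev DOmega (Ω : Set 𝕆) : Type := Quotient (ohatSetoid Ω)

end Octonion

/-!
Near `t₀`, the point `τ_{Θ t}(γ t)` can be moved back to `τ_{Θ t₀}(γ t)` by sliding the
imaginary unit along `Θ` (over a path from `t₀` to `t` in a small path-connected neighbourhood)
while keeping the base point `γ t` fixed; since `Ω` is open this stays inside `Ω`. Such a slide is a circular lifting with constant base, so both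
points are CCL-equivalent, and locally `Γ` is the continuous map `t ↦ [(γ t, Θ t₀)]` into the
fixed slice indexed by `Θ t₀`.
-/

open Filter Topology

namespace Octonion

theorem continuous_tau : Continuous fun p : 𝕆 × ℂ => tau p.1 p.2 := by
  unfold tau
  fun_prop

theorem cclConnected_of_path {Ω : Set 𝕆} {z : ℂ} {I J : 𝕆} (p : Path I J)
    (hp : ∀ u, p u ∈ sph) (hpΩ : ∀ u, tau (p u) z ∈ Ω) :
    CCLConnected Ω (tau J z) (tau I z) :=
  ⟨fun _ => z, p, fun _ => I, ⟨continuous_const, p.continuous, hp⟩,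
    ⟨continuous_const, continuous_const, fun _ => p.source ▸ hp 0⟩, p.source,
    hpΩ, fun _ => p.source ▸ hpΩ 0, by rw [p.target], rfl⟩

variable {X : Type*} [TopologicalSpace X] {Ω : Set 𝕆} {γ : X → ℂ} {Θ : X → 𝕆}

theorem eventually_cclEquiv_tau_of_continuous [LocallyPathConnectedSpace X] (hΩ : IsOpen Ω)
    (hγ : Continuous γ) (hΘ : Continuous Θ) (hsph : ∀ x, Θ x ∈ sph) {x₀ : X}
    (hx₀ : tau (Θ x₀) (γ x₀) ∈ Ω) :
    ∀ᶠ x in 𝓝 x₀, tau (Θ x₀) (γ x) ∈ Ω ∧ CCLEquiv Ω (tau (Θ x) (γ x)) (tau (Θ x₀) (γ x)) := by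
  have hW : {q : X × X | tau (Θ q.1) (γ q.2) ∈ Ω} ∈ 𝓝 x₀ ×ˢ 𝓝 x₀ := by
    rw [← nhds_prod_eq]
    exact (hΩ.preimage (continuous_tau.comp ((hΘ.comp continuous_fst).prodMk
      (hγ.comp continuous_snd)))).mem_nhds hx₀
  obtain ⟨V, hV, hVW⟩ := Filter.mem_prod_self_iff.1 hW
  filter_upwards [pathComponentIn_mem_nhds hV] with x ⟨p, hpV⟩
  have hxV : x ∈ V := p.target ▸ hpV 1
  refine ⟨@hVW (x₀, x) ⟨mem_of_mem_nhds hV, hxV⟩, Relation.EqvGen.rel _ _ ?_⟩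
  exact cclConnected_of_path (p.map hΘ) (fun u => hsph (p u))
    fun u => @hVW (p u, x) ⟨hpV u, hxV⟩

theorem continuous_mk_ohat [LocallyPathConnectedSpace X] (hΩ : IsOpen Ω)
    (hγ : Continuous γ) (hΘ : Continuous Θ) (hsph : ∀ x, Θ x ∈ sph)
    (hmem : ∀ x, tau (Θ x) (γ x) ∈ Ω) :
    Continuous fun x =>
      (Quotient.mk (ohatSetoid Ω) ⟨⟨Θ x, hsph x⟩, ⟨γ x, hmem x⟩⟩ : DOmega Ω) := by
  refine continuous_iff_continuousAt.2 fun x₀ => ?_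
  set S := {x | tau (Θ x₀) (γ x) ∈ Ω ∧ CCLEquiv Ω (tau (Θ x) (γ x)) (tau (Θ x₀) (γ x))}
  have hS : S ∈ 𝓝 x₀ := eventually_cclEquiv_tau_of_continuous hΩ hγ hΘ hsph (hmem x₀)
  refine ContinuousOn.continuousAt ?_ hS
  rw [continuousOn_iff_continuous_domRestrict]
  have hfreeze : S.domRestrict (fun x =>
      (Quotient.mk (ohatSetoid Ω) ⟨⟨Θ x, hsph x⟩, ⟨γ x, hmem x⟩⟩ : DOmega Ω)) =
      fun x : S => Quotient.mk (ohatSetoid Ω) ⟨⟨Θ x₀, hsph x₀⟩, ⟨γ x, x.2.1⟩⟩ :=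
    funext fun x => Quotient.sound ⟨rfl, x.2.2⟩
  rw [hfreeze]
  exact continuous_quotient_mk'.comp
    (continuous_sigmaMk.comp ((hγ.comp continuous_subtype_val).subtype_mk _))

end Octonion

open Octonion in
theorem stmt19_general (Ω : Set 𝕆) (hΩo : IsOpen Ω)
    (γ : unitInterval → ℂ) (Θ : unitInterval → 𝕆) (hγ : Continuous γ) (hΘ : Continuous Θ)
    (hsph : ∀ t, Θ t ∈ sph) (hmem : ∀ t, tau (Θ t) (γ t) ∈ Ω) :
    Continuous (fun t : unitInterval =>
        (Quotient.mk (ohatSetoid Ω) ⟨⟨Θ t, hsph t⟩, ⟨γ t, hmem t⟩⟩ : DOmega Ω)) ∧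
      ∀ P : DOmega Ω → ℂ, (∀ p : OHat Ω, P (Quotient.mk (ohatSetoid Ω) p) = p.2.1) →
        ∀ t, P (Quotient.mk (ohatSetoid Ω) ⟨⟨Θ t, hsph t⟩, ⟨γ t, hmem t⟩⟩) = γ t := by
  have : LocallyPathConnectedSpace unitInterval :=
    (convex_Icc (0 : ℝ) 1).locallyPathConnectedSpace
  exact ⟨continuous_mk_ohat hΩo hγ hΘ hsph hmem, fun P hP _ => hP _⟩

open Octonion in
/-- a circular lifting `γ_Θ` contained in `Ω` induces a continuous lifting
`Γ : t ↦ [(γ t, Θ t)]` of `γ` to `D_Ω` with respect to the natural projection `P`. -/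
theorem stmt19 (Ω : Set 𝕆) (hΩo : IsOpen Ω) (hΩc : IsConnected Ω)
    (γ : unitInterval → ℂ) (Θ : unitInterval → 𝕆) (hγ : Continuous γ) (hΘ : Continuous Θ)
    (hsph : ∀ t, Θ t ∈ sph) (hmem : ∀ t, tau (Θ t) (γ t) ∈ Ω) :
    Continuous (fun t : unitInterval =>
        (Quotient.mk (ohatSetoid Ω) ⟨⟨Θ t, hsph t⟩, ⟨γ t, hmem t⟩⟩ : DOmega Ω)) ∧
      ∀ P : DOmega Ω → ℂ, (∀ p : OHat Ω, P (Quotient.mk (ohatSetoid Ω) p) = p.2.1) →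
        ∀ t, P (Quotient.mk (ohatSetoid Ω) ⟨⟨Θ t, hsph t⟩, ⟨γ t, hmem t⟩⟩) = γ t :=
  stmt19_general Ω hΩo γ Θ hγ hΘ hsph hmem
end
end
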